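/- For any saturated strongly stable ideal I ⊆ R, there is a finite sequence of contractions transforming I into its double saturation sat_{x_{n−1},x_n}(I). -/

import Mathlib

open MvPolynomial

noncomputable section

/-- The polynomial ring `K[x_0,…,x_n]` in `n+1` variables. -/
abbrev PR (K : Type*) [Field K] (n : ℕ) := MvPolynomial (Fin (n+1)) K

variable {K : Type*} [Field K] {n : ℕ}

/-- The monomial `x^A`. -/
def mon (A : Fin (n+1) →₀ ℕ) : PR K n := monomial A 1

/-- Total degree of the monomial with exponent vector `A`. -/
def mdeg (A : Fin (n+1) →₀ ℕ) : ℕ := ∑ i, A i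

/-- The largest index of a variable dividing `x^A` (0 if `A = 0`). -/
def maxIdx (A : Fin (n+1) →₀ ℕ) : Fin (n+1) := WithBot.unbotD 0 (A.support.max)

/-- The exponent vector of `(x_i / x_j) · x^A`. -/
def shiftM (A : Fin (n+1) →₀ ℕ) (i j : Fin (n+1)) : Fin (n+1) →₀ ℕ :=
  A + Finsupp.single i 1 - Finsupp.single j 1

/-- `I` is a monomial ideal: generated by a set of monomials. -/
def IsMonomialIdeal (I : Ideal (PR K n)) : Prop :=
  ∃ S : Set (Fin (n+1) →₀ ℕ), I = Ideal.span ((fun A => (mon A : PR K n)) '' S)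

/-- Strongly stable monomial ideal. -/
def StronglyStable (I : Ideal (PR K n)) : Prop :=
  ∀ A : Fin (n+1) →₀ ℕ, mon A ∈ I → ∀ i j : Fin (n+1), A j ≠ 0 → i < j →
    mon (shiftM A i j) ∈ I

/-- Stable monomial ideal. -/
def Stable (I : Ideal (PR K n)) : Prop :=
  ∀ A : Fin (n+1) →₀ ℕ, A ≠ 0 → mon A ∈ I → ∀ i : Fin (n+1), i < maxIdx A →
    mon (shiftM A i (maxIdx A)) ∈ I

/-- `x^A` is a minimal monomial generator of `I`. -/
def MinGen (I : Ideal (PR K n)) (A : Fin (n+1) →₀ ℕ) : Prop :=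
  mon A ∈ I ∧ ∀ B : Fin (n+1) →₀ ℕ, B ≤ A → B ≠ A → mon B ∉ I

/-- The set of exponent vectors of minimal monomial generators of `I`. -/
def Gens (I : Ideal (PR K n)) : Set (Fin (n+1) →₀ ℕ) := {A | MinGen I A}

/-- The irrelevant maximal ideal `(x_0,…,x_n)`. -/
def irrIdeal (K : Type*) [Field K] (n : ℕ) : Ideal (PR K n) :=
  Ideal.span (Set.range fun i : Fin (n+1) => (X i : PR K n))

/-- `I` is saturated: `(I : (x_0,…,x_n)) = I`. -/
def Saturated (I : Ideal (PR K n)) : Prop :=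
  Submodule.colon I (irrIdeal K n) = I

/-- The saturation `∪ₖ (I : (x_0,…,x_n)^k)`. -/
def saturationOf (I : Ideal (PR K n)) : Ideal (PR K n) :=
  ⨆ k : ℕ, Submodule.colon I (((irrIdeal K n) ^ k : Ideal (PR K n)) : Set (PR K n))

/-- The Hilbert function of `R/I`: `j ↦ dim_K [R/I]_j`. -/
def hilbF {σ : Type*} (I : Ideal (MvPolynomial σ K)) (j : ℕ) : ℕ :=
  Module.finrank K
    ((homogeneousSubmodule σ K j).map (Ideal.Quotient.mkₐ K I).toLinearMap)

/-- `p` is the Hilbert polynomial of `R/I`. -/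
def IsHilbPoly {σ : Type*} (I : Ideal (MvPolynomial σ K)) (p : Polynomial ℚ) : Prop :=
  ∃ N : ℕ, ∀ j : ℕ, N ≤ j → p.eval (j : ℚ) = (hilbF I j : ℚ)

/-- The binomial-coefficient polynomial `C(q, k) = q(q-1)⋯(q-k+1)/k!`. -/
def choosePoly (q : Polynomial ℚ) (k : ℕ) : Polynomial ℚ :=
  ((k.factorial : ℚ))⁻¹ • ∏ j ∈ Finset.range k, (q - Polynomial.C (j : ℚ))

/-- The canonical representation `p(z) = Σ_{i=0}^d [C(z+i,i+1) − C(z+i−b_i,i+1)]`. -/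
def canonicalHP (d : ℕ) (b : ℕ → ℕ) : Polynomial ℚ :=
  ∑ i ∈ Finset.range (d+1),
    (choosePoly (Polynomial.X + Polynomial.C (i : ℚ)) (i+1)
      - choosePoly (Polynomial.X + Polynomial.C (i : ℚ) - Polynomial.C (b i : ℚ)) (i+1))

/-- `x^A >_lex x^B`. -/
def LexGt (A B : Fin (n+1) →₀ ℕ) : Prop :=
  ∃ i : Fin (n+1), (∀ j : Fin (n+1), j < i → A j = B j) ∧ B i < A i

/-- `I` is a lexsegment ideal. -/
def IsLexsegment (I : Ideal (PR K n)) : Prop :=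
  IsMonomialIdeal I ∧ ∀ A B : Fin (n+1) →₀ ℕ, mdeg A = mdeg B → mon B ∈ I →
    LexGt A B → mon A ∈ I

/-- `I` is a homogeneous ideal. -/
def Homog (I : Ideal (PR K n)) : Prop :=
  ∀ f ∈ I, ∀ j : ℕ, homogeneousComponent j f ∈ I

open Fin.NatCast in
/-- The set of right-shifts of `x^A`. -/
def rightShifts (A : Fin (n+1) →₀ ℕ) : Set (Fin (n+1) →₀ ℕ) :=
  {B | ∃ i : Fin (n+1), (i : ℕ) + 2 ≤ n ∧ A i ≠ 0 ∧
    B = shiftM A ((((i : ℕ) + 1 : ℕ)) : Fin (n+1)) i}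

open Fin.NatCast in
/-- The set of left-shifts of `x^A`. -/
def leftShifts (A : Fin (n+1) →₀ ℕ) : Set (Fin (n+1) →₀ ℕ) :=
  {B | ∃ i : Fin (n+1), 1 ≤ (i : ℕ) ∧ (i : ℕ) + 1 ≤ n ∧ A i ≠ 0 ∧
    B = shiftM A ((((i : ℕ) - 1 : ℕ)) : Fin (n+1)) i}

/-- The monomials `x^A x_r, …, x^A x_{n-1}` with `r = max(x^A)`. -/
def expSet (A : Fin (n+1) →₀ ℕ) : Set (Fin (n+1) →₀ ℕ) :=
  {B | ∃ j : Fin (n+1), ((maxIdx A : ℕ)) ≤ (j : ℕ) ∧ (j : ℕ) + 1 ≤ n ∧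
    B = A + Finsupp.single j 1}

/-- `x^A ≠ 1` is expandable in `I`. -/
def Expandable (I : Ideal (PR K n)) (A : Fin (n+1) →₀ ℕ) : Prop :=
  A ≠ 0 ∧ MinGen I A ∧ ∀ B ∈ rightShifts A, ¬ MinGen I B

open Fin.NatCast in
/-- `x^A ≠ 1` is contractible in `I`. -/
def Contractible (I : Ideal (PR K n)) (A : Fin (n+1) →₀ ℕ) : Prop :=
  A ≠ 0 ∧ mon A ∉ I ∧ MinGen I (A + Finsupp.single (((n - 1 : ℕ)) : Fin (n+1)) 1) ∧
    ∀ B ∈ leftShifts A, mon B ∈ I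

/-- The expansion of `x^A` in `I`. -/
def expansionIdeal (I : Ideal (PR K n)) (A : Fin (n+1) →₀ ℕ) : Ideal (PR K n) :=
  Ideal.span ((fun B => (mon B : PR K n)) '' ((Gens I \ {A}) ∪ expSet A))

/-- The contraction of `x^A` in `I`. -/
def contractionIdeal (I : Ideal (PR K n)) (A : Fin (n+1) →₀ ℕ) : Ideal (PR K n) :=
  Ideal.span ((fun B => (mon B : PR K n)) '' ((Gens I ∪ {A}) \ expSet A))

open Fin.NatCast in
/-- Setting `x_{n-1} = x_n = 1` in the exponent vector `A`. -/
def stripLastTwo (A : Fin (n+1) →₀ ℕ) : Fin (n+1) →₀ ℕ :=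
  Finsupp.update (Finsupp.update A (((n : ℕ)) : Fin (n+1)) 0) (((n - 1 : ℕ)) : Fin (n+1)) 0

/-- The double saturation `sat_{x_{n-1},x_n}(I)` (as an ideal of `R`). -/
def doubleSat (I : Ideal (PR K n)) : Ideal (PR K n) :=
  Ideal.span ((fun A => (mon (stripLastTwo A) : PR K n)) '' Gens I)

/-- Restriction of an exponent vector to the first `n` variables. -/
def restrictExp (A : Fin (n+1) →₀ ℕ) : Fin n →₀ ℕ :=
  Finsupp.comapDomain Fin.castSucc A (Fin.castSucc_injective n).injOn

/-- The ideal `I · R^{(1)}` in `K[x_0,…,x_{n-1}]` (for saturated monomial `I`). -/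
def restrictIdeal (I : Ideal (PR K n)) : Ideal (MvPolynomial (Fin n) K) :=
  Ideal.span ((fun A => (monomial (restrictExp A) (1 : K) : MvPolynomial (Fin n) K)) '' Gens I)

/-- Lex order on exponent vectors in `n` variables. -/
def LexGt' (A B : Fin n →₀ ℕ) : Prop :=
  ∃ i : Fin n, (∀ j : Fin n, j < i → A j = B j) ∧ B i < A i

/-- Monomial ideal in `K[x_0,…,x_{n-1}]`. -/
def IsMonomialIdeal' (I : Ideal (MvPolynomial (Fin n) K)) : Prop :=
  ∃ S : Set (Fin n →₀ ℕ),
    I = Ideal.span ((fun A => (monomial A (1 : K) : MvPolynomial (Fin n) K)) '' S)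

/-- Lexsegment ideal in `K[x_0,…,x_{n-1}]`. -/
def IsLexsegment' (I : Ideal (MvPolynomial (Fin n) K)) : Prop :=
  IsMonomialIdeal' I ∧ ∀ A B : Fin n →₀ ℕ, (∑ i, A i) = (∑ i, B i) →
    monomial B (1 : K) ∈ I → LexGt' A B → monomial A (1 : K) ∈ I

/-- `I` is almost lexsegment: saturated strongly stable with `I·R^{(1)}` lexsegment. -/
def AlmostLex (I : Ideal (PR K n)) : Prop :=
  IsMonomialIdeal I ∧ StronglyStable I ∧ Saturated I ∧ IsLexsegment' (restrictIdeal I)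

/-- A graded free resolution of the ideal `I`, with `rank i` the rank of the `i`-th
free module and `twist i k` the degrees of the standard basis elements. -/
structure GradedFreeRes (I : Ideal (PR K n)) where
  rank : ℕ → ℕ
  twist : (i : ℕ) → Fin (rank i) → ℕ
  diff : (i : ℕ) → ((Fin (rank (i+1)) → PR K n) →ₗ[PR K n] (Fin (rank i) → PR K n))
  aug : (Fin (rank 0) → PR K n) →ₗ[PR K n] PR K n
  aug_range : LinearMap.range aug = I
  aug_graded : ∀ k, aug (Pi.single k 1) ∈ homogeneousSubmodule (Fin (n+1)) K (twist 0 k)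
  diff_graded : ∀ i k l, diff i (Pi.single k 1) l = 0 ∨
    (twist i l ≤ twist (i+1) k ∧
      diff i (Pi.single k 1) l ∈ homogeneousSubmodule (Fin (n+1)) K (twist (i+1) k - twist i l))
  exact_aug : LinearMap.range (diff 0) = LinearMap.ker aug
  exact_diff : ∀ i, LinearMap.range (diff (i+1)) = LinearMap.ker (diff i)

/-- A resolution is minimal if all differential entries lie in the irrelevant ideal. -/
def MinimalRes {I : Ideal (PR K n)} (F : GradedFreeRes I) : Prop :=
  ∀ i k l, constantCoeff (F.diff i (Pi.single k 1) l) = 0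

end
open Fin.NatCast in
/-- A single contraction step: `J'` is obtained from `J` by contracting a contractible
monomial (with the convention that contracting `1` when `x_{n-1} ∈ G(J)` yields `(1)`). -/
def ContrStep {K : Type*} [Field K] {n : ℕ} (J J' : Ideal (PR K n)) : Prop :=
  (∃ A : Fin (n+1) →₀ ℕ, Contractible J A ∧ J' = contractionIdeal J A) ∨
  (MinGen J (Finsupp.single (((n - 1 : ℕ)) : Fin (n+1)) 1) ∧ J' = ⊤)

/-! Induct on the total exponent of `x_{n-1}` in the minimal generators. Saturation and strong
stability keep `x_n` out of every minimal generator. If some minimal generator involves `x_{n-1}`,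
take the lex-largest one, `x^A x_{n-1}`: lex-maximality puts every left-shift of `x^A` in `I`, so
`x^A` is contractible (or `A = 0`, and one step reaches `(1)`). The contraction is again saturated
and strongly stable, has the same double saturation and a smaller weight. Once no minimal
generator involves `x_{n-1}` or `x_n`, the ideal is its own double saturation. -/

section MonomialIdeal

variable {K : Type*} [Field K] {n : ℕ}

variable (K) in
noncomputable def monomialSpan (S : Set (Fin (n+1) →₀ ℕ)) : Ideal (PR K n) :=
  Ideal.span ((fun B => (mon B : PR K n)) '' S)

theorem mem_monomialSpan_iff {S : Set (Fin (n+1) →₀ ℕ)} {f : PR K n} :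
    f ∈ monomialSpan K S ↔ ∀ d ∈ f.support, ∃ s ∈ S, s ≤ d :=
  mem_ideal_span_monomial_image

theorem mon_mem_monomialSpan_iff {S : Set (Fin (n+1) →₀ ℕ)} {A : Fin (n+1) →₀ ℕ} :
    (mon A : PR K n) ∈ monomialSpan K S ↔ ∃ s ∈ S, s ≤ A := by
  classical
  simp [mem_monomialSpan_iff, mon, support_monomial]

theorem mon_mem_of_le {J : Ideal (PR K n)} {A B : Fin (n+1) →₀ ℕ}
    (hA : (mon A : PR K n) ∈ J) (hAB : A ≤ B) : (mon B : PR K n) ∈ J := by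
  have h : (mon B : PR K n) = mon (B - A) * mon A := by
    rw [mon, mon, mon, monomial_mul, mul_one, tsub_add_cancel_of_le hAB]
  exact h ▸ J.mul_mem_left _ hA

theorem monomialSpan_le_iff {S : Set (Fin (n+1) →₀ ℕ)} {J : Ideal (PR K n)} :
    monomialSpan K S ≤ J ↔ ∀ s ∈ S, (mon s : PR K n) ∈ J := by
  rw [monomialSpan, Ideal.span_le, Set.image_subset_iff]
  rfl

theorem monomialSpan_mono {S T : Set (Fin (n+1) →₀ ℕ)} (h : ∀ s ∈ S, ∃ t ∈ T, t ≤ s) :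
    monomialSpan K S ≤ monomialSpan K T :=
  monomialSpan_le_iff.2 fun s hs => mon_mem_monomialSpan_iff.2 (h s hs)

theorem exists_minGen_le {J : Ideal (PR K n)} {A : Fin (n+1) →₀ ℕ}
    (hA : (mon A : PR K n) ∈ J) : ∃ G, MinGen J G ∧ G ≤ A := by
  induction A using WellFoundedLT.induction with
  | _ A ih =>
    by_cases hmin : MinGen J A
    · exact ⟨A, hmin, le_rfl⟩
    · obtain ⟨B, hBA, hne, hB⟩ : ∃ B ≤ A, B ≠ A ∧ (mon B : PR K n) ∈ J := by
        simpa [MinGen, hA] using hmin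
      obtain ⟨G, hG, hGB⟩ := ih B (lt_of_le_of_ne hBA hne) hB
      exact ⟨G, hG, hGB.trans hBA⟩

theorem eq_monomialSpan_gens {J : Ideal (PR K n)} (hJ : IsMonomialIdeal J) :
    J = monomialSpan K (Gens J) := by
  obtain ⟨S, rfl⟩ := hJ
  refine le_antisymm (monomialSpan_le_iff.2 fun s hs => ?_) (monomialSpan_le_iff.2 fun G hG => hG.1)
  exact mon_mem_monomialSpan_iff.2 (exists_minGen_le (Ideal.subset_span ⟨s, hs, rfl⟩))

theorem gens_monomialSpan_subset (S : Set (Fin (n+1) →₀ ℕ)) : Gens (monomialSpan K S) ⊆ S := by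
  intro B hB
  obtain ⟨s, hs, hsB⟩ := mon_mem_monomialSpan_iff.1 hB.1
  obtain rfl : s = B := by_contra fun hne => hB.2 s hsB hne (Ideal.subset_span ⟨s, hs, rfl⟩)
  exact hs

theorem gens_finite (J : Ideal (PR K n)) : (Gens J).Finite :=
  IsAntichain.finite_of_partiallyWellOrderedOn (fun _ hA _ hB hne hle => hB.2 _ hle hne hA.1)
    (Set.isPWO_of_wellQuasiOrderedLE _)

theorem mem_colon_irrIdeal_iff {J : Ideal (PR K n)} {f : PR K n} :
    f ∈ J.colon (irrIdeal K n) ↔ ∀ i, f * X i ∈ J := by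
  rw [irrIdeal, Ideal.colon_span, Submodule.mem_colon, Set.forall_mem_range]
  rfl

theorem mon_mul_X (A : Fin (n+1) →₀ ℕ) (i : Fin (n+1)) :
    (mon A : PR K n) * X i = mon (A + Finsupp.single i 1) := by
  rw [mon, mon, X, monomial_mul, one_mul]

end MonomialIdeal

section Shifts

open Fin.NatCast

variable {n : ℕ}

def penult (n : ℕ) : Fin (n+1) := ⟨n - 1, by omega⟩

@[simp] theorem val_penult : (penult n : ℕ) = n - 1 := rfl

theorem val_natCast_of_le {m : ℕ} (h : m ≤ n) : ((m : Fin (n+1)) : ℕ) = m :=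
  Fin.val_cast_of_lt (by omega)

theorem natCast_sub_one_eq_penult : ((n - 1 : ℕ) : Fin (n+1)) = penult n :=
  Fin.ext (val_natCast_of_le (by omega))

theorem exists_eq_add_single {A : Fin (n+1) →₀ ℕ} {i : Fin (n+1)} (h : A i ≠ 0) :
    ∃ B, A = B + Finsupp.single i 1 :=
  ⟨A - Finsupp.single i 1,
    (tsub_add_cancel_of_le (Finsupp.single_le_iff.2 (Nat.one_le_iff_ne_zero.2 h))).symm⟩

theorem shiftM_apply (A : Fin (n+1) →₀ ℕ) (i j k : Fin (n+1)) :
    shiftM A i j k = A k + Finsupp.single i 1 k - Finsupp.single j 1 k := rfl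

theorem shiftM_mono {A B : Fin (n+1) →₀ ℕ} (h : A ≤ B) (i j : Fin (n+1)) :
    shiftM A i j ≤ shiftM B i j := by
  unfold shiftM
  gcongr

theorem le_shiftM_of_lt {E B : Fin (n+1) →₀ ℕ} {i j : Fin (n+1)} (hEB : E ≤ B) (hj : E j < B j) :
    E ≤ shiftM B i j := by
  intro k
  have := hEB k
  simp only [shiftM_apply, Finsupp.single_apply]
  split_ifs <;> subst_vars <;> omega

theorem shiftM_add {A : Fin (n+1) →₀ ℕ} (E : Fin (n+1) →₀ ℕ) {i j : Fin (n+1)} (hj : A j ≠ 0) :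
    shiftM (A + E) i j = shiftM A i j + E := by
  ext k
  simp only [shiftM_apply, Finsupp.add_apply, Finsupp.single_apply]
  split_ifs <;> subst_vars <;> omega

theorem shiftM_shiftM {A : Fin (n+1) →₀ ℕ} {i j k : Fin (n+1)} (hk : A k ≠ 0) (hij : i ≠ j)
    (hjk : j ≠ k) : shiftM (shiftM A j k) i j = shiftM A i k := by
  ext m
  simp only [shiftM_apply, Finsupp.single_apply]
  split_ifs <;> subst_vars <;> omega

theorem toLex_lt_shiftM (A : Fin (n+1) →₀ ℕ) {i j : Fin (n+1)} (hij : i < j) :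
    toLex A < toLex (shiftM A i j) := by
  refine Finsupp.Lex.lt_iff.2 ⟨i, fun k hk => ?_, ?_⟩ <;>
    simp only [ofLex_toLex, shiftM_apply, Finsupp.single_apply]
  · rw [if_neg hk.ne', if_neg (hk.trans hij).ne']
    rfl
  · rw [if_neg hij.ne']
    simp

end Shifts

section StronglyStable

variable {K : Type*} [Field K] {n : ℕ} {J : Ideal (PR K n)}

theorem StronglyStable.minGen_apply_last_eq_zero (hss : StronglyStable J) (hsat : Saturated J)
    {A : Fin (n+1) →₀ ℕ} (hA : MinGen J A) : A (Fin.last n) = 0 := by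
  by_contra hlast
  obtain ⟨B, rfl⟩ := exists_eq_add_single hlast
  refine hA.2 B le_self_add (by simp) (hsat ▸ mem_colon_irrIdeal_iff.2 fun i => ?_)
  rw [mon_mul_X]
  rcases (Fin.le_last i).lt_or_eq with hi | rfl
  · convert hss _ hA.1 i _ (by simp) hi using 2
    ext k
    simp only [shiftM_apply, Finsupp.add_apply, Finsupp.single_apply]
    split_ifs <;> subst_vars <;> omega
  · exact hA.1

theorem StronglyStable.mon_mem_of_not_minGen (hss : StronglyStable J)
    {B : Fin (n+1) →₀ ℕ} {p : Fin (n+1)} (hB : (mon (B + Finsupp.single p 1) : PR K n) ∈ J)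
    (hnot : ¬ MinGen J (B + Finsupp.single p 1)) (htail : ∀ k, p < k → B k = 0) :
    (mon B : PR K n) ∈ J := by
  obtain ⟨E, hE, hEB⟩ := exists_minGen_le hB
  have hEk := fun k => hEB k
  simp only [Finsupp.add_apply, Finsupp.single_apply] at hEk
  by_cases hEp : E p ≤ B p
  · refine mon_mem_of_le hE.1 fun k => ?_
    have := hEk k
    split_ifs at this <;> subst_vars <;> omega
  -- Otherwise the generator is smaller than `B + e_p` at some `k < p`, and moving one unit
  -- from `p` to `k` gives a member of `J` dividing `x^B`.
  · obtain ⟨k, hk⟩ := (Finsupp.lt_def.1 (lt_of_le_of_ne hEB fun h => hnot (h ▸ hE))).2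
    simp only [Finsupp.add_apply, Finsupp.single_apply] at hk
    have hkp : k < p := by
      rcases lt_trichotomy k p with h | rfl | h
      · exact h
      · have := hEk k
        simp only [if_true] at hk this
        omega
      · simp [htail k h, h.ne] at hk
    refine mon_mem_of_le (hss E hE.1 k p (by omega) hkp) fun m => ?_
    have := hEk m
    simp only [shiftM_apply, Finsupp.single_apply]
    split_ifs at this hk ⊢ <;> subst_vars <;> omega

end StronglyStable

section Contraction

open Fin.NatCast

variable {K : Type*} [Field K] {n : ℕ} {J : Ideal (PR K n)}

theorem StronglyStable.leftShifts_mem_of_lexMax (hss : StronglyStable J) {A : Fin (n+1) →₀ ℕ}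
    (hC : MinGen J (A + Finsupp.single (penult n) 1)) (hAl : A (Fin.last n) = 0)
    (hmax : ∀ D, MinGen J D → D (penult n) ≠ 0 →
      toLex D ≤ toLex (A + Finsupp.single (penult n) 1)) :
    ∀ B ∈ leftShifts A, (mon B : PR K n) ∈ J := by
  rintro _ ⟨i, hi1, hin, hAi, rfl⟩
  set i' : Fin (n+1) := (((i : ℕ) - 1 : ℕ) : Fin (n+1))
  have hi' : (i' : ℕ) = i - 1 := val_natCast_of_le (by omega)
  have hi'i : i' < i := by rw [Fin.lt_def]; omega
  have hCi : (A + Finsupp.single (penult n) 1 : Fin (n+1) →₀ ℕ) i ≠ 0 := by simp [hAi]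
  have hshift := shiftM_add (Finsupp.single (penult n) 1) (i := i') hAi
  -- `x_{i-1}/x_i · x^A x_{n-1}` is lex-larger than the chosen generator, hence not minimal.
  refine hss.mon_mem_of_not_minGen (hshift ▸ hss _ hC.1 i' i hCi hi'i) (fun hD => ?_) ?_
  · refine (toLex_lt_shiftM _ hi'i).not_ge (hmax _ (hshift ▸ hD) ?_)
    simp [hshift]
  · intro k hk
    obtain rfl : k = Fin.last n := by
      rw [Fin.lt_def, val_penult] at hk
      exact Fin.ext (by rw [Fin.val_last]; omega)
    have hi'l : i' ≠ Fin.last n := by rw [ne_eq, Fin.ext_iff, hi', Fin.val_last]; omega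
    have hil : i ≠ Fin.last n := by rw [ne_eq, Fin.ext_iff, Fin.val_last]; omega
    simp [shiftM_apply, hAl, hi'l, hil]

theorem StronglyStable.shiftM_mem_of_leftShifts (hss : StronglyStable J) {A : Fin (n+1) →₀ ℕ}
    (hL : ∀ B ∈ leftShifts A, (mon B : PR K n) ∈ J) (hAl : A (Fin.last n) = 0)
    {i j : Fin (n+1)} (hij : i < j) (hj : A j ≠ 0) : (mon (shiftM A i j) : PR K n) ∈ J := by
  have hjn : (j : ℕ) + 1 ≤ n := by
    have : j ≠ Fin.last n := by rintro rfl; exact hj hAl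
    have := Fin.val_lt_last this
    omega
  have hj1 : 1 ≤ (j : ℕ) := by rw [Fin.lt_def] at hij; omega
  have hleft := hL _ ⟨j, hj1, hjn, hj, rfl⟩
  set j' : Fin (n+1) := (((j : ℕ) - 1 : ℕ) : Fin (n+1))
  have hj' : (j' : ℕ) = j - 1 := val_natCast_of_le (by omega)
  rcases eq_or_ne i j' with rfl | hij'
  · exact hleft
  have hj'j : j' ≠ j := by rw [ne_eq, Fin.ext_iff]; omega
  have hij'' : i < j' := by
    rw [Fin.lt_def] at hij ⊢
    rw [ne_eq, Fin.ext_iff] at hij'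
    omega
  rw [← shiftM_shiftM hj hij' hj'j]
  refine hss _ hleft i j' ?_ hij''
  simp [shiftM_apply, hj'j.symm]

theorem contractionIdeal_eq_monomialSpan (J : Ideal (PR K n)) (A : Fin (n+1) →₀ ℕ) :
    contractionIdeal J A = monomialSpan K ((Gens J ∪ {A}) \ expSet A) := rfl

theorem self_notMem_expSet (A : Fin (n+1) →₀ ℕ) : A ∉ expSet A := by
  rintro ⟨j, -, -, h⟩
  simpa using congrArg (· j) h

theorem mon_mem_contractionIdeal_of_mem {A B : Fin (n+1) →₀ ℕ} (hB : (mon B : PR K n) ∈ J) :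
    (mon B : PR K n) ∈ contractionIdeal J A := by
  obtain ⟨G, hG, hGB⟩ := exists_minGen_le hB
  rw [contractionIdeal_eq_monomialSpan, mon_mem_monomialSpan_iff]
  by_cases hGA : G ∈ expSet A
  · obtain ⟨j, -, -, rfl⟩ := hGA
    exact ⟨A, ⟨Or.inr rfl, self_notMem_expSet A⟩, le_self_add.trans hGB⟩
  · exact ⟨G, ⟨Or.inl hG, hGA⟩, hGB⟩

theorem StronglyStable.contractionIdeal (hss : StronglyStable J) {A : Fin (n+1) →₀ ℕ}
    (hL : ∀ B ∈ leftShifts A, (mon B : PR K n) ∈ J) (hAl : A (Fin.last n) = 0) :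
    StronglyStable (contractionIdeal J A) := by
  intro B hB i j hj hij
  obtain ⟨E, hE, hEB⟩ := mon_mem_monomialSpan_iff.1 hB
  rcases (hEB j).lt_or_eq with hlt | heq
  · exact mon_mem_monomialSpan_iff.2 ⟨E, hE, le_shiftM_of_lt hEB hlt⟩
  have hEj : E j ≠ 0 := heq ▸ hj
  have hshift : (mon (shiftM E i j) : PR K n) ∈ J := by
    rcases hE.1 with hE | rfl
    · exact hss E hE.1 i j hEj hij
    · exact hss.shiftM_mem_of_leftShifts hL hAl hij hEj
  exact mon_mem_of_le (mon_mem_contractionIdeal_of_mem hshift) (shiftM_mono hEB i j)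

theorem saturated_monomialSpan {S : Set (Fin (n+1) →₀ ℕ)} (hS : ∀ s ∈ S, s (Fin.last n) = 0) :
    Saturated (monomialSpan K S) := by
  refine le_antisymm (fun f hf => ?_) fun f hf => mem_colon_irrIdeal_iff.2 fun i =>
    Ideal.mul_mem_right _ _ hf
  have hfX := mem_monomialSpan_iff.1 (mem_colon_irrIdeal_iff.1 hf (Fin.last n))
  refine mem_monomialSpan_iff.2 fun d hd => ?_
  obtain ⟨s, hs, hsd⟩ := hfX _ (by rw [support_mul_X]; exact Finset.mem_map_of_mem _ hd)
  refine ⟨s, hs, fun k => ?_⟩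
  have := hsd k
  simp only [addRightEmbedding_apply, Finsupp.add_apply, Finsupp.single_apply] at this
  split_ifs at this with h
  · subst h; simp [hS s hs]
  · simpa using this

theorem saturated_contractionIdeal (hlast : ∀ G, MinGen J G → G (Fin.last n) = 0)
    {A : Fin (n+1) →₀ ℕ} (hAl : A (Fin.last n) = 0) : Saturated (contractionIdeal J A) :=
  saturated_monomialSpan fun s hs => hs.1.elim (hlast s) fun h => (Set.mem_singleton_iff.1 h) ▸ hAl

end Contraction

section DoubleSaturation

variable {K : Type*} [Field K] {n : ℕ} {J : Ideal (PR K n)}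

theorem stripLastTwo_apply (A : Fin (n+1) →₀ ℕ) (i : Fin (n+1)) :
    stripLastTwo A i = if i = penult n ∨ i = Fin.last n then 0 else A i := by
  simp only [stripLastTwo, natCast_sub_one_eq_penult, Fin.natCast_eq_last, Finsupp.update_apply]
  split_ifs <;> simp_all

theorem stripLastTwo_mono {A B : Fin (n+1) →₀ ℕ} (h : A ≤ B) : stripLastTwo A ≤ stripLastTwo B := by
  intro i
  simp only [stripLastTwo_apply]
  split_ifs
  exacts [le_rfl, h i]

theorem stripLastTwo_add_single_penult (A : Fin (n+1) →₀ ℕ) (k : ℕ) :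
    stripLastTwo (A + Finsupp.single (penult n) k) = stripLastTwo A := by
  ext i
  simp only [stripLastTwo_apply, Finsupp.add_apply, Finsupp.single_apply]
  split_ifs <;> simp_all

theorem stripLastTwo_eq_self {A : Fin (n+1) →₀ ℕ} (hp : A (penult n) = 0)
    (hl : A (Fin.last n) = 0) : stripLastTwo A = A := by
  ext i
  rw [stripLastTwo_apply]
  split_ifs with h
  · rcases h with rfl | rfl <;> simp [*]
  · rfl

theorem doubleSat_eq_monomialSpan (J : Ideal (PR K n)) :
    doubleSat J = monomialSpan K (stripLastTwo '' Gens J) := by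
  rw [doubleSat, monomialSpan, Set.image_image]

theorem doubleSat_monomialSpan (S : Set (Fin (n+1) →₀ ℕ)) :
    doubleSat (monomialSpan K S) = monomialSpan K (stripLastTwo '' S) := by
  rw [doubleSat_eq_monomialSpan]
  refine le_antisymm (monomialSpan_mono ?_) (monomialSpan_mono ?_)
  · rintro _ ⟨G, hG, rfl⟩
    exact ⟨_, ⟨G, gens_monomialSpan_subset S hG, rfl⟩, le_rfl⟩
  · rintro _ ⟨s, hs, rfl⟩
    have hsS : (mon s : PR K n) ∈ monomialSpan K S := Ideal.subset_span ⟨s, hs, rfl⟩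
    obtain ⟨G, hG, hGs⟩ := exists_minGen_le hsS
    exact ⟨_, ⟨G, hG, rfl⟩, stripLastTwo_mono hGs⟩

theorem doubleSat_contractionIdeal {A : Fin (n+1) →₀ ℕ}
    (hC : MinGen J (A + Finsupp.single (penult n) 1)) :
    doubleSat (contractionIdeal J A) = doubleSat J := by
  rw [contractionIdeal_eq_monomialSpan, doubleSat_monomialSpan, doubleSat_eq_monomialSpan]
  refine le_antisymm (monomialSpan_mono ?_) (monomialSpan_mono ?_)
  · rintro _ ⟨s, ⟨hs | rfl, -⟩, rfl⟩
    · exact ⟨_, ⟨s, hs, rfl⟩, le_rfl⟩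
    · exact ⟨_, ⟨_, hC, rfl⟩, (stripLastTwo_add_single_penult s 1).le⟩
  · rintro _ ⟨G, hG, rfl⟩
    by_cases hGA : G ∈ expSet A
    · obtain ⟨j, -, -, rfl⟩ := hGA
      exact ⟨_, ⟨A, ⟨Or.inr rfl, self_notMem_expSet A⟩, rfl⟩, stripLastTwo_mono le_self_add⟩
    · exact ⟨_, ⟨G, ⟨Or.inl hG, hGA⟩, rfl⟩, le_rfl⟩

theorem doubleSat_eq_self (hJ : IsMonomialIdeal J)
    (h : ∀ G, MinGen J G → G (penult n) = 0 ∧ G (Fin.last n) = 0) : doubleSat J = J := by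
  have hfix : Set.EqOn stripLastTwo id (Gens J) := fun G hG =>
    stripLastTwo_eq_self (h G hG).1 (h G hG).2
  rw [doubleSat_eq_monomialSpan, hfix.image_eq_self, ← eq_monomialSpan_gens hJ]

theorem doubleSat_eq_top (h : MinGen J (Finsupp.single (penult n) 1)) : doubleSat J = ⊤ := by
  have hstrip : stripLastTwo (Finsupp.single (penult n) 1) = 0 := by
    simpa [stripLastTwo_eq_self] using stripLastTwo_add_single_penult (0 : Fin (n+1) →₀ ℕ) 1
  have hmem : (mon (stripLastTwo (Finsupp.single (penult n) 1)) : PR K n) ∈ doubleSat J :=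
    Ideal.subset_span ⟨_, h, rfl⟩
  rw [Ideal.eq_top_iff_one]
  simpa [hstrip, mon] using hmem

end DoubleSaturation

section PenultWeight

variable {K : Type*} [Field K] {n : ℕ} {J : Ideal (PR K n)}

noncomputable def penultWeight (J : Ideal (PR K n)) : ℕ :=
  ∑ A ∈ (gens_finite J).toFinset, A (penult n)

theorem val_maxIdx_le {A : Fin (n+1) →₀ ℕ} (hA : A (Fin.last n) = 0) :
    (maxIdx A : ℕ) ≤ n - 1 := by
  rw [maxIdx]
  cases hmax : A.support.max with
  | bot => simp
  | coe m =>
    have hm : m ≠ Fin.last n := fun h => Finsupp.mem_support_iff.1 (Finset.mem_of_max hmax) (h ▸ hA)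
    have := Fin.val_lt_last hm
    simp only [WithBot.unbotD_coe]
    omega

theorem add_single_penult_mem_expSet {A : Fin (n+1) →₀ ℕ}
    (hl : (A + Finsupp.single (penult n) 1 : Fin (n+1) →₀ ℕ) (Fin.last n) = 0) :
    A + Finsupp.single (penult n) 1 ∈ expSet A := by
  have hn : penult n ≠ Fin.last n := by rintro h; simp [h] at hl
  have hAl : A (Fin.last n) = 0 := by simpa [hn] using hl
  refine ⟨penult n, val_maxIdx_le hAl, ?_, rfl⟩
  rw [ne_eq, Fin.ext_iff, val_penult, Fin.val_last] at hn
  simp only [val_penult]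
  omega

theorem penultWeight_contractionIdeal_lt {A : Fin (n+1) →₀ ℕ}
    (hC : MinGen J (A + Finsupp.single (penult n) 1))
    (hCl : (A + Finsupp.single (penult n) 1 : Fin (n+1) →₀ ℕ) (Fin.last n) = 0)
    (hA : (mon A : PR K n) ∉ J) :
    penultWeight (contractionIdeal J A) < penultWeight J := by
  classical
  set C := A + Finsupp.single (penult n) 1
  set T := (gens_finite J).toFinset
  have hsub : (gens_finite (contractionIdeal J A)).toFinset ⊆ insert A (T.erase C) := by
    intro B hB
    rw [Set.Finite.mem_toFinset, contractionIdeal_eq_monomialSpan] at hB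
    obtain ⟨hB | rfl, hBe⟩ := gens_monomialSpan_subset _ hB
    · refine Finset.mem_insert_of_mem (Finset.mem_erase.2 ⟨?_, (Set.Finite.mem_toFinset _).2 hB⟩)
      rintro rfl
      exact hBe (add_single_penult_mem_expSet hCl)
    · exact Finset.mem_insert_self _ _
  have hAT : A ∉ T.erase C := fun h =>
    hA ((Set.Finite.mem_toFinset _).1 (Finset.mem_of_mem_erase h)).1
  calc penultWeight (contractionIdeal J A)
      ≤ ∑ B ∈ insert A (T.erase C), B (penult n) := Finset.sum_le_sum_of_subset hsub
    _ = A (penult n) + ∑ B ∈ T.erase C, B (penult n) := Finset.sum_insert hAT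
    _ < ∑ B ∈ T.erase C, B (penult n) + C (penult n) := by simp [C]; omega
    _ = penultWeight J := Finset.sum_erase_add _ _ ((Set.Finite.mem_toFinset _).2 hC)

end PenultWeight

theorem contractions_to_doubleSat_general
    {K : Type*} [Field K] {n : ℕ} (I : Ideal (PR K n))
    (hmono : IsMonomialIdeal I) (hss : StronglyStable I) (hsat : Saturated I) :
    Relation.ReflTransGen ContrStep I (doubleSat I) := by
  induction hw : penultWeight I using Nat.strong_induction_on generalizing I with
  | _ w ih =>
  have hlast (G) (hG : MinGen I G) : G (Fin.last n) = 0 := hss.minGen_apply_last_eq_zero hsat hG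
  by_cases hpen : ∃ C, MinGen I C ∧ C (penult n) ≠ 0
  swap
  · push Not at hpen
    rw [doubleSat_eq_self hmono fun G hG => ⟨hpen G hG, hlast G hG⟩]
  obtain ⟨C, ⟨hC, hCp⟩, hmax⟩ := Set.exists_max_image {C | MinGen I C ∧ C (penult n) ≠ 0} toLex
    ((gens_finite I).subset fun _ h => h.1) hpen
  obtain ⟨A, rfl⟩ := exists_eq_add_single hCp
  have hAl : A (Fin.last n) = 0 := by simpa using le_self_add.trans (hlast _ hC).le
  rcases eq_or_ne A 0 with rfl | hA0
  · rw [zero_add] at hC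
    rw [doubleSat_eq_top hC]
    exact .single (Or.inr ⟨natCast_sub_one_eq_penult ▸ hC, rfl⟩)
  have hAI : (mon A : PR K n) ∉ I := fun hA => hC.2 A le_self_add (by simp) hA
  have hL := hss.leftShifts_mem_of_lexMax hC hAl fun D hD hDp => hmax D ⟨hD, hDp⟩
  refine .head (Or.inl ⟨A, ⟨hA0, hAI, natCast_sub_one_eq_penult ▸ hC, hL⟩, rfl⟩) ?_
  rw [← doubleSat_contractionIdeal hC]
  exact ih _ (hw ▸ penultWeight_contractionIdeal_lt hC (hlast _ hC) hAI) _ ⟨_, rfl⟩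
    (hss.contractionIdeal hL hAl) (saturated_contractionIdeal hlast hAl) rfl

/-- a finite sequence of contractions takes a saturated strongly stable
ideal to its double saturation. -/
theorem contractions_to_doubleSat
    {K : Type*} [Field K] {n : ℕ} (hn : 2 ≤ n) (I : Ideal (PR K n))
    (hmono : IsMonomialIdeal I) (hss : StronglyStable I) (hsat : Saturated I) :
    Relation.ReflTransGen ContrStep I (doubleSat I) :=
  contractions_to_doubleSat_general I hmono hss hsat
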